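/- Under Poissonian photon-pair statistics with mean μ > 0, heralding detector efficiency η_B ∈ (0,1] and dark-count probability d_B ∈ [0,1), the probability that a heralded pulse carries more than one photon pair equals P_noqub = 1 - e^{-μ}[d_B(1+μ) + (1-d_B)μη_B] / (d_B + (1-d_B)(1-e^{-μη_B})), and this quantity is strictly increasing in μ for fixed x_B = μη_B and d_B. -/

import Mathlib

open Real

/- The heralded pulse carries zero pairs with weight e^{-μ} d_B and one pair with weight
μ e^{-μ} (d_B + (1 - d_B) η_B), out of a total heralding probability
D = d_B + (1 - d_B)(1 - e^{-x_B}); both numerator forms of P_noqub are 1 - (this sum)/D.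
For fixed x_B the μ-dependence is only through e^{-μ}(d_B(1 + μ) + (1 - d_B) x_B), whose
derivative -e^{-μ}(d_B μ + (1 - d_B) x_B) is negative. -/

lemma herald_prob_pos {d x : ℝ} (hd0 : 0 ≤ d) (hd1 : d < 1) (hx : 0 < x) :
    0 < d + (1 - d) * (1 - exp (-x)) := by
  have : 0 < 1 - exp (-x) := sub_pos.mpr (exp_lt_one_iff.mpr (neg_neg_of_pos hx))
  positivity

lemma hasDerivAt_exp_neg_mul_affine (d c m : ℝ) :
    HasDerivAt (fun m : ℝ => exp (-m) * (d * (1 + m) + c)) (-(exp (-m) * (d * m + c))) m := by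
  have hexp : HasDerivAt (fun m : ℝ => exp (-m)) (-exp (-m)) m := by
    simpa using (hasDerivAt_neg m).exp
  have haff : HasDerivAt (fun m : ℝ => d * (1 + m) + c) d m := by
    simpa using (((hasDerivAt_id m).const_add 1).const_mul d).add_const c
  exact (hexp.mul haff).congr_deriv (by ring)

lemma strictAntiOn_exp_neg_mul_affine {d c : ℝ} (hd : 0 ≤ d) (hc : 0 < c) :
    StrictAntiOn (fun m : ℝ => exp (-m) * (d * (1 + m) + c)) (Set.Ici 0) := by
  apply strictAntiOn_of_deriv_neg (convex_Ici 0)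
  · exact fun m _ => (hasDerivAt_exp_neg_mul_affine d c m).continuousAt.continuousWithinAt
  · intro m hm
    rw [interior_Ici, Set.mem_Ioi] at hm
    rw [(hasDerivAt_exp_neg_mul_affine d c m).deriv, neg_lt_zero]
    positivity

theorem P_noqub_formula_and_mono_general (dB ηB μ : ℝ)
    (hdB0 : 0 ≤ dB) (hdB1 : dB < 1) (hηB0 : 0 < ηB) (hμ : 0 < μ) :
    (1 - exp (-μ) * (dB * (1 + μ) + (1 - dB) * (μ * ηB)) /
          (dB + (1 - dB) * (1 - exp (-(μ * ηB)))) =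
        ((dB + (1 - dB) * (1 - exp (-(μ * ηB)))) -
            (exp (-μ) * dB + μ * exp (-μ) * (dB + (1 - dB) * ηB))) /
          (dB + (1 - dB) * (1 - exp (-(μ * ηB))))) ∧
      ∀ xB : ℝ, 0 < xB →
        StrictMonoOn
          (fun m : ℝ =>
            1 - exp (-m) * (dB * (1 + m) + (1 - dB) * xB) /
                  (dB + (1 - dB) * (1 - exp (-xB))))
          (Set.Ioi 0) := by
  constructor
  · rw [one_sub_div (herald_prob_pos hdB0 hdB1 (mul_pos hμ hηB0)).ne']
    ring
  · intro xB hxB a ha b hb hab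
    have hdecr := strictAntiOn_exp_neg_mul_affine hdB0 (mul_pos (sub_pos.mpr hdB1) hxB)
      (Set.mem_Ici_of_Ioi ha) (Set.mem_Ici_of_Ioi hb) hab
    exact sub_lt_sub_left (div_lt_div_of_pos_right hdecr (herald_prob_pos hdB0 hdB1 hxB)) 1

/-- Under Poissonian photon-pair statistics with mean μ, heralding efficiency η_B
and dark-count probability d_B, the probability that a heralded pulse carries more
than one photon pair equals
P_noqub = 1 - e^{-μ}[d_B(1+μ)+(1-d_B)μη_B]/(d_B+(1-d_B)(1-e^{-μη_B}))
(conditioning on the heralding event, where the pulse has 0 pairs with Poisson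
weight e^{-μ} heralded with probability d_B and 1 pair with Poisson weight μe^{-μ}
heralded with probability d_B+(1-d_B)η_B), and this quantity is strictly
increasing in μ for fixed x_B = μη_B and d_B. -/
theorem P_noqub_formula_and_mono (dB ηB μ : ℝ)
    (hdB0 : 0 ≤ dB) (hdB1 : dB < 1) (hηB0 : 0 < ηB) (hηB1 : ηB ≤ 1) (hμ : 0 < μ) :
    (1 - exp (-μ) * (dB * (1 + μ) + (1 - dB) * (μ * ηB)) /
          (dB + (1 - dB) * (1 - exp (-(μ * ηB)))) =
        ((dB + (1 - dB) * (1 - exp (-(μ * ηB)))) -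
            (exp (-μ) * dB + μ * exp (-μ) * (dB + (1 - dB) * ηB))) /
          (dB + (1 - dB) * (1 - exp (-(μ * ηB))))) ∧
      ∀ xB : ℝ, 0 < xB →
        StrictMonoOn
          (fun m : ℝ =>
            1 - exp (-m) * (dB * (1 + m) + (1 - dB) * xB) /
                  (dB + (1 - dB) * (1 - exp (-xB))))
          (Set.Ioi 0) :=
  P_noqub_formula_and_mono_general dB ηB μ hdB0 hdB1 hηB0 hμ
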